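/- (Noether's theorem, Lie algebra case.) Let k ≥ 1, t₀ < t₁, let L : (Fin k → 𝔤) → ℝ be smooth, and let η ∈ 𝔤 be an infinitesimal symmetry of L, i.e. ∑_{r=1}^{k} ∂_rL(A)([A_r, η]) = 0 for every A ∈ (Fin k → 𝔤). Let ξ : ℝ → 𝔤 be smooth and satisfy the higher-order Euler–Poincaré equations for L on [t₀,t₁]. Define the momenta p^r(t) := ∑_{j=r}^{k−1} (−1)^{j−r} · D^{j−r}[s ↦ ∂_{j+1}L(Jξ(s))](t) ∈ 𝔤* for 0 ≤ r ≤ k−1 (so p^0 = π), and the momentum function G(t) := p^0(t)(η) + ∑_{r=1}^{k−1} p^r(t)([ξ^{(r−1)}(t), η]). Then G is constant on [t₀, t₁]. -/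

import Mathlib

/-!
Write `f_j := ∂_{j+1}L ∘ Jξ` and `c_r := [ξ^{(r)}, η]`. The momenta obey the recursion
`(p^{r+1})' = f_r - p^r` with `p^{k-1} = f_{k-1}`, and `c_r' = c_{r+1}`. Differentiating `G`, the
Euler–Poincaré equation turns `(p⁰)'(η)` into `p⁰(c_0)`, the terms `p^r(c_r)` telescope, and what
is left is `∑_r f_r(c_r) = ∑_r ∂_{r+1}L(Jξ)([ξ^{(r)}, η])`, which vanishes by the symmetry of `L`.
-/

noncomputable section

/-- Partial Fréchet derivative in slot `r` of a map defined on `Fin m → E`,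
as a continuous linear map (zero junk value for `r ≥ m`). -/
def pd {m : ℕ} {E W : Type*} [NormedAddCommGroup E] [NormedSpace ℝ E]
    [NormedAddCommGroup W] [NormedSpace ℝ W]
    (F : (Fin m → E) → W) (r : ℕ) (A : Fin m → E) : E →L[ℝ] W :=
  if h : r < m then
    (fderiv ℝ F A).comp
      (ContinuousLinearMap.pi (Pi.single (⟨r, h⟩ : Fin m) (ContinuousLinearMap.id ℝ E)))
  else 0

/-- The reduced `k`-jet of a curve: slot `i` (Lean indexing `0,…,k-1`, i.e. the paper's
slot `r = i+1`) holds the `i`-th derivative. -/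
def rjet {E : Type*} [NormedAddCommGroup E] [NormedSpace ℝ E] (k : ℕ) (q : ℝ → E) (t : ℝ) :
    Fin k → E := fun i => iteratedDeriv i q t

open Finset
open scoped ContDiff

section Smooth

variable {F : Type*} [NormedAddCommGroup F] [NormedSpace ℝ F]

theorem ContDiff.contDiff_iteratedDeriv {f : ℝ → F} (hf : ContDiff ℝ ∞ f) (n : ℕ) :
    ContDiff ℝ ∞ (iteratedDeriv n f) := by
  rw [iteratedDeriv_eq_iterate]
  exact hf.iterate_deriv n

theorem ContDiff.hasDerivAt_iteratedDeriv {f : ℝ → F} (hf : ContDiff ℝ ∞ f) (n : ℕ) (t : ℝ) :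
    HasDerivAt (iteratedDeriv n f) (iteratedDeriv (n + 1) f t) t := by
  rw [iteratedDeriv_succ]
  exact ((hf.differentiable_iteratedDeriv n (mod_cast WithTop.coe_lt_top _)) t).hasDerivAt

theorem ContDiff.rjet {ξ : ℝ → F} (hξ : ContDiff ℝ ∞ ξ) (k : ℕ) : ContDiff ℝ ∞ (rjet k ξ) :=
  contDiff_pi.2 fun i => hξ.contDiff_iteratedDeriv i

theorem ContDiff.pd {m : ℕ} {W : Type*} [NormedAddCommGroup W] [NormedSpace ℝ W]
    {L : (Fin m → F) → W} (hL : ContDiff ℝ ∞ L) (r : ℕ) : ContDiff ℝ ∞ (pd L r) := by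
  unfold _root_.pd
  split_ifs
  · exact (hL.fderiv_right le_rfl).clm_comp contDiff_const
  · exact contDiff_const

theorem eq_of_forall_hasDerivAt_zero_Icc {f : ℝ → F} {a b : ℝ}
    (hf : ∀ x ∈ Set.Icc a b, HasDerivAt f 0 x) {x y : ℝ} (hx : x ∈ Set.Icc a b)
    (hy : y ∈ Set.Icc a b) : f x = f y := by
  have hconst := constant_of_has_deriv_right_zero
    (fun z hz => (hf z hz).continuousAt.continuousWithinAt)
    (fun z hz => (hf z (Set.Ico_subset_Icc_self hz)).hasDerivWithinAt)
  rw [hconst x hx, hconst y hy]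

/-- The momentum `pʳ` for slot functionals `f j = ∂_{j+1}L ∘ Jξ`; `n = k - 1` is the top slot. -/
def momentum (f : ℕ → ℝ → F) (n r : ℕ) (t : ℝ) : F :=
  ∑ j ∈ Icc r n, (-1 : ℝ) ^ (j - r) • iteratedDeriv (j - r) (f j) t

theorem momentum_self (f : ℕ → ℝ → F) (n : ℕ) : momentum f n n = f n := by
  ext t
  simp [momentum]

variable {f : ℕ → ℝ → F}

theorem hasDerivAt_momentum (hf : ∀ j, ContDiff ℝ ∞ (f j)) (n r : ℕ) (t : ℝ) :
    HasDerivAt (momentum f n r)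
      (∑ j ∈ Icc r n, (-1 : ℝ) ^ (j - r) • iteratedDeriv (j - r + 1) (f j) t) t :=
  HasDerivAt.fun_sum fun j _ => ((hf j).hasDerivAt_iteratedDeriv (j - r) t).const_smul _

theorem hasDerivAt_momentum_succ (hf : ∀ j, ContDiff ℝ ∞ (f j)) {n r : ℕ} (hr : r < n) (t : ℝ) :
    HasDerivAt (momentum f n (r + 1)) (f r t - momentum f n r t) t := by
  convert hasDerivAt_momentum hf n (r + 1) t using 1
  have hsign : ∀ j ∈ Icc (r + 1) n, (-1 : ℝ) ^ (j - r) • iteratedDeriv (j - r) (f j) t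
      = -((-1 : ℝ) ^ (j - (r + 1)) • iteratedDeriv (j - (r + 1) + 1) (f j) t) := by
    intro j hj
    obtain ⟨i, rfl⟩ := Nat.exists_eq_add_of_le (mem_Icc.1 hj).1
    simp [show r + 1 + i - r = i + 1 by omega, pow_succ]
  rw [momentum, ← insert_Icc_add_one_left_eq_Icc hr.le, sum_insert (by simp), sum_congr rfl hsign]
  simp

end Smooth

theorem hasDerivAt_pairing_sum_telescope {E : Type*} [NormedAddCommGroup E] [NormedSpace ℝ E]
    {P f : ℕ → ℝ → E →L[ℝ] ℝ} {c : ℕ → ℝ → E} {η : E} {n : ℕ} {t : ℝ}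
    (hP₀ : HasDerivAt (fun s => P 0 s η) (P 0 t (c 0 t)) t)
    (hP : ∀ r < n, HasDerivAt (P (r + 1)) (f r t - P r t) t)
    (hc : ∀ r < n, HasDerivAt (c r) (c (r + 1) t) t) :
    HasDerivAt (fun s => P 0 s η + ∑ r ∈ range n, P (r + 1) s (c r s))
      (∑ r ∈ range n, f r t (c r t) + P n t (c n t)) t := by
  have hsum : HasDerivAt (fun s => ∑ r ∈ range n, P (r + 1) s (c r s))
      (∑ r ∈ range n, (f r t (c r t) + (P (r + 1) t (c (r + 1) t) - P r t (c r t)))) t := by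
    refine HasDerivAt.fun_sum fun r hr => ?_
    convert (hP r (mem_range.1 hr)).clm_apply (hc r (mem_range.1 hr)) using 1
    rw [sub_apply]
    ring
  refine (hP₀.add hsum).congr_deriv ?_
  rw [sum_add_distrib, sum_range_sub (fun r => P r t (c r t))]
  ring

theorem noether_lie_algebra {𝔤 : Type*} [NormedAddCommGroup 𝔤] [NormedSpace ℝ 𝔤]
    [FiniteDimensional ℝ 𝔤]
    (bra : 𝔤 →ₗ[ℝ] 𝔤 →ₗ[ℝ] 𝔤)
    (k : ℕ) (hk : 1 ≤ k) (t₀ t₁ : ℝ)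
    (L : (Fin k → 𝔤) → ℝ) (hL : ContDiff ℝ (⊤ : ℕ∞) L)
    (η : 𝔤)
    (hsym : ∀ A : Fin k → 𝔤, (∑ i : Fin k, pd L i A (bra (A i) η)) = 0)
    (ξ : ℝ → 𝔤) (hξ : ContDiff ℝ (⊤ : ℕ∞) ξ)
    (π : ℝ → 𝔤 →L[ℝ] ℝ)
    (hπ : π = fun t => ∑ i ∈ Finset.range k,
        (-1 : ℝ) ^ i • iteratedDeriv i (fun s => pd L i (rjet k ξ s)) t)
    (hEP : ∀ t ∈ Set.Icc t₀ t₁, ∀ ζ : 𝔤, deriv π t ζ = π t (bra (ξ t) ζ))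
    (p : ℕ → ℝ → 𝔤 →L[ℝ] ℝ)
    (hp : ∀ r, p r = fun t => ∑ j ∈ Finset.Icc r (k - 1),
        (-1 : ℝ) ^ (j - r) • iteratedDeriv (j - r) (fun s => pd L j (rjet k ξ s)) t)
    (G : ℝ → ℝ)
    (hG : G = fun t => p 0 t η +
        ∑ r ∈ Finset.Icc 1 (k - 1), p r t (bra (iteratedDeriv (r - 1) ξ t) η)) :
    ∀ s ∈ Set.Icc t₀ t₁, ∀ t ∈ Set.Icc t₀ t₁, G s = G t := by
  obtain ⟨n, rfl⟩ : ∃ n, k = n + 1 := ⟨k - 1, by omega⟩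
  set f : ℕ → ℝ → 𝔤 →L[ℝ] ℝ := fun j s => pd L j (rjet (n + 1) ξ s)
  have hf : ∀ j, ContDiff ℝ ∞ (f j) := fun j => (hL.pd j).comp (hξ.rjet _)
  have hp' : ∀ r, p r = momentum f n r := fun r => by
    rw [hp r, Nat.add_sub_cancel]; rfl
  have hπ' : π = momentum f n 0 := by
    rw [← hp', hp, hπ, Nat.add_sub_cancel, ← Nat.range_succ_eq_Icc_zero]; rfl
  set c : ℕ → ℝ → 𝔤 := fun r s => bra (iteratedDeriv r ξ s) η
  have hG' : G = fun s => momentum f n 0 s η + ∑ r ∈ range n, momentum f n (r + 1) s (c r s) := by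
    ext s
    simp only [hG, hp', Nat.add_sub_cancel, ← Ico_add_one_right_eq_Icc, sum_Ico_eq_sum_range]
    simp [add_comm 1, c]
  have hc : ∀ r t, HasDerivAt (c r) (c (r + 1) t) t := fun r t =>
    (LinearMap.toContinuousLinearMap (bra.flip η)).hasFDerivAt.comp_hasDerivAt t
      (hξ.hasDerivAt_iteratedDeriv r t)
  have hderiv : ∀ t ∈ Set.Icc t₀ t₁, HasDerivAt G 0 t := by
    intro t ht
    have hP₀ : HasDerivAt (fun s => momentum f n 0 s η) (momentum f n 0 t (c 0 t)) t := by
      rw [hπ'] at hEP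
      exact ((ContinuousLinearMap.apply ℝ ℝ η).hasFDerivAt.comp_hasDerivAt t
        (hasDerivAt_momentum hf n 0 t).differentiableAt.hasDerivAt).congr_deriv (hEP t ht η)
    have := hasDerivAt_pairing_sum_telescope hP₀ (fun r hr => hasDerivAt_momentum_succ hf hr t)
      (fun r _ => hc r t)
    have hslots : ∑ r ∈ range (n + 1), f r t (c r t) = 0 := by
      rw [← Fin.sum_univ_eq_sum_range]
      exact hsym (rjet (n + 1) ξ t)
    rwa [momentum_self, ← sum_range_succ (fun r => f r t (c r t)), hslots, ← hG'] at this
  exact fun s hs t ht => eq_of_forall_hasDerivAt_zero_Icc hderiv hs ht
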